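/- Let α ≠ 0, let A = diag(1,1,α), and let X ∈ M₃(ℝ) be the matrix whose only nonzero entry is a 1 in position (2,1). Let H = {exp(sA + tX) : s,t ∈ ℝ} act on ℝ³; explicitly, exp(sA+tX)v = (e^s v₁, e^s(v₂ + t v₁), e^{αs} v₃). Then Ω = {v ∈ ℝ³ : v₁ ≠ 0} is H-invariant and Σ = {v ∈ ℝ³ : |v₁| = 1 and v₂ = 0} is a topological section for the H-action on Ω; consequently, since every connected component of Σ is unbounded, Ω/H contains no nonempty compact open subset. -/

import Mathlib

open Set Topology
open scoped Real

noncomputable section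

/-- The action of `(s,t) ∈ ℝ²` on `ℝ³` by `exp(sA + tX)` with `A = diag(1,1,α)` and
`X = E₂₁`: explicitly `v ↦ (e^s v₁, e^s(v₂ + t v₁), e^{αs} v₃)`. -/
def act (α : ℝ) (p : ℝ × ℝ) (v : Fin 3 → ℝ) : Fin 3 → ℝ :=
  ![Real.exp p.1 * v 0, Real.exp p.1 * (v 1 + p.2 * v 0), Real.exp (α * p.1) * v 2]

/-- `Ω = {v ∈ ℝ³ : v₁ ≠ 0}`. -/
def Om : Set (Fin 3 → ℝ) := {v | v 0 ≠ 0}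

/-- `Σ = {v ∈ ℝ³ : |v₁| = 1 and v₂ = 0}`. -/
def Sec : Set (Fin 3 → ℝ) := {v | |v 0| = 1 ∧ v 1 = 0}

/-- The orbit equivalence relation on `Ω`; `Quot (orbitRel α)` is the orbit space `Ω/H`
with the quotient topology. -/
def orbitRel (α : ℝ) (x y : ↥Om) : Prop :=
  ∃ p : ℝ × ℝ, act α p (x : Fin 3 → ℝ) = (y : Fin 3 → ℝ)

/-! The orbit of `v ∈ Ω` is determined by the invariants `v₁ / |v₁|` and `v₃ / |v₁| ^ α`, and
the element `(log |v₁|, v₂ / v₁)` of `H` carries the point `(v₁ / |v₁|, 0, v₃ / |v₁| ^ α)` of `Σ`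
to `v`. All of this depends continuously on `v`, which gives `ℝ² × Σ ≃ₜ Ω` and `Ω/H ≃ₜ Σ`. A
compact open subset of the Hausdorff space `Σ` is clopen, so it contains every vertical line
`{(±1, 0, z)}` it meets; but the third coordinate is unbounded there. -/

theorem not_exists_isCompact_isOpen_of_isPreconnected_unbounded {X : Type*} [TopologicalSpace X]
    [T2Space X] (f : X → ℝ) (hf : Continuous f)
    (h : ∀ x, ∃ C : Set X, x ∈ C ∧ IsPreconnected C ∧ ¬ BddAbove (f '' C)) :
    ¬ ∃ K : Set X, K.Nonempty ∧ IsCompact K ∧ IsOpen K := by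
  rintro ⟨K, ⟨x, hxK⟩, hK, hKo⟩
  obtain ⟨C, hxC, hC, hfC⟩ := h x
  have hCK : C ⊆ K := hC.subset_isClopen ⟨hK.isClosed, hKo⟩ ⟨x, hxC, hxK⟩
  exact hfC ((hK.bddAbove_image hf.continuousOn).mono (image_mono hCK))

def Quot.homeomorphOfRetraction {X Y : Type*} [TopologicalSpace X] [TopologicalSpace Y]
    {R : X → X → Prop} (r : X → Y) (hr : Continuous r) (hrR : ∀ x y, R x y → r x = r y)
    (s : Y → X) (hs : Continuous s) (hrs : ∀ y, r (s y) = y)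
    (hsr : ∀ x, Quot.mk R (s (r x)) = Quot.mk R x) : Quot R ≃ₜ Y where
  toFun := Quot.lift r hrR
  invFun y := Quot.mk R (s y)
  left_inv := Quot.ind hsr
  right_inv := hrs
  continuous_toFun := continuous_quot_lift hrR hr
  continuous_invFun := continuous_quot_mk.comp hs

section

variable {α : ℝ}

@[simp] lemma act_apply_zero (p : ℝ × ℝ) (v : Fin 3 → ℝ) :
    act α p v 0 = Real.exp p.1 * v 0 := rfl

@[simp] lemma act_apply_one (p : ℝ × ℝ) (v : Fin 3 → ℝ) :
    act α p v 1 = Real.exp p.1 * (v 1 + p.2 * v 0) := rfl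

@[simp] lemma act_apply_two (p : ℝ × ℝ) (v : Fin 3 → ℝ) :
    act α p v 2 = Real.exp (α * p.1) * v 2 := rfl

lemma act_mem_om (p : ℝ × ℝ) {v : Fin 3 → ℝ} (hv : v ∈ Om) : act α p v ∈ Om :=
  mul_ne_zero (Real.exp_pos _).ne' hv

lemma sec_subset_om : Sec ⊆ Om := fun v hv h0 => by
  simpa [h0] using hv.1

def secRetraction (α : ℝ) (v : Fin 3 → ℝ) : Fin 3 → ℝ :=
  ![v 0 / |v 0|, 0, v 2 / |v 0| ^ α]

def orbitCoord (v : Fin 3 → ℝ) : ℝ × ℝ :=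
  (Real.log |v 0|, v 1 / v 0)

lemma exp_orbitCoord_fst {v : Fin 3 → ℝ} (hv : v ∈ Om) : Real.exp (orbitCoord v).1 = |v 0| :=
  Real.exp_log (abs_pos.2 hv)

lemma secRetraction_mem_sec {v : Fin 3 → ℝ} (hv : v ∈ Om) : secRetraction α v ∈ Sec :=
  ⟨by simp [secRetraction, abs_div, abs_ne_zero.2 hv], rfl⟩

lemma act_orbitCoord_secRetraction {v : Fin 3 → ℝ} (hv : v ∈ Om) :
    act α (orbitCoord v) (secRetraction α v) = v := by
  have hv0 : v 0 ≠ 0 := hv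
  have hv' : |v 0| ≠ 0 := abs_ne_zero.2 hv0
  ext i
  fin_cases i <;> simp only [Fin.zero_eta, Fin.mk_one, Fin.reduceFinMk, act_apply_zero,
    act_apply_one, act_apply_two, mul_comm α, Real.exp_mul, exp_orbitCoord_fst hv]
  · simp [secRetraction, mul_div_cancel₀ _ hv']
  · simp [secRetraction, orbitCoord]
    field_simp
  · simp [secRetraction, mul_div_cancel₀ _ (Real.rpow_pos_of_pos (abs_pos.2 hv0) α).ne']

lemma secRetraction_act (p : ℝ × ℝ) {v : Fin 3 → ℝ} :
    secRetraction α (act α p v) = secRetraction α v := by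
  have hp : |Real.exp p.1| = Real.exp p.1 := abs_of_pos (Real.exp_pos _)
  ext i
  fin_cases i
  · simp [secRetraction, abs_mul, hp, mul_div_mul_left _ _ (Real.exp_pos p.1).ne']
  · rfl
  · simp [secRetraction, abs_mul, hp, Real.mul_rpow (Real.exp_pos p.1).le (abs_nonneg _),
      ← Real.exp_mul, mul_comm α, mul_div_mul_left _ _ (Real.exp_pos _).ne']

lemma secRetraction_of_mem_sec {v : Fin 3 → ℝ} (hv : v ∈ Sec) : secRetraction α v = v := by
  ext i
  fin_cases i
  · simp [secRetraction, hv.1]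
  · exact hv.2.symm
  · simp [secRetraction, hv.1]

lemma orbitCoord_act_of_mem_sec (p : ℝ × ℝ) {v : Fin 3 → ℝ} (hv : v ∈ Sec) :
    orbitCoord (act α p v) = p := by
  have hv0 : v 0 ≠ 0 := sec_subset_om hv
  simp [orbitCoord, abs_mul, hv.1, hv.2, mul_div_mul_left _ _ (Real.exp_pos p.1).ne', hv0]

lemma continuous_act_uncurry : Continuous fun x : (ℝ × ℝ) × (Fin 3 → ℝ) => act α x.1 x.2 := by
  unfold act
  fun_prop

lemma continuous_apply_om (i : Fin 3) : Continuous fun v : Om => (v : Fin 3 → ℝ) i :=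
  (continuous_apply i).comp continuous_subtype_val

lemma continuous_secRetraction_om : Continuous fun v : Om => secRetraction α v := by
  have h0 : ∀ v : Om, |(v : Fin 3 → ℝ) 0| ≠ 0 := fun v => abs_ne_zero.2 v.2
  have hpow : ∀ v : Om, |(v : Fin 3 → ℝ) 0| ^ α ≠ 0 := fun v =>
    (Real.rpow_pos_of_pos (abs_pos.2 v.2) α).ne'
  have hc := continuous_apply_om
  exact .matrixVecCons (.div (hc 0) (hc 0).abs h0) (.matrixVecCons continuous_const
    (.matrixVecCons (.div (hc 2) ((hc 0).abs.rpow_const fun v => .inl (h0 v)) hpow)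
      continuous_const))

lemma continuous_orbitCoord_om : Continuous fun v : Om => orbitCoord v :=
  .prodMk (.log (continuous_apply_om 0).abs fun v => abs_ne_zero.2 v.2)
    (.div (continuous_apply_om 1) (continuous_apply_om 0) fun v => v.2)

def omToSec (α : ℝ) (v : Om) : Sec :=
  ⟨secRetraction α v, secRetraction_mem_sec v.2⟩

def secHomeomorph (α : ℝ) : ((ℝ × ℝ) × Sec) ≃ₜ Om where
  toFun x := ⟨act α x.1 x.2, act_mem_om x.1 (sec_subset_om x.2.2)⟩
  invFun v := (orbitCoord v, omToSec α v)
  left_inv := fun ⟨p, c⟩ => Prod.ext (orbitCoord_act_of_mem_sec (α := α) p c.2)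
    (Subtype.ext ((secRetraction_act p).trans (secRetraction_of_mem_sec c.2)))
  right_inv v := Subtype.ext (act_orbitCoord_secRetraction v.2)
  continuous_toFun :=
    (continuous_act_uncurry.comp (continuous_id.prodMap continuous_subtype_val)).subtype_mk _
  continuous_invFun := continuous_orbitCoord_om.prodMk (continuous_secRetraction_om.subtype_mk _)

lemma coe_secHomeomorph_apply (p : ℝ × ℝ) (c : Sec) :
    (secHomeomorph α (p, c) : Fin 3 → ℝ) = act α p c :=
  rfl

def orbitSpaceHomeomorphSec (α : ℝ) : Quot (orbitRel α) ≃ₜ Sec :=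
  Quot.homeomorphOfRetraction (omToSec α) (continuous_secRetraction_om.subtype_mk _)
    (fun _ _ ⟨p, hp⟩ => Subtype.ext ((secRetraction_act p).symm.trans (congrArg _ hp)))
    (Set.inclusion sec_subset_om) (continuous_inclusion sec_subset_om)
    (fun c => Subtype.ext (secRetraction_of_mem_sec c.2))
    (fun v => Quot.sound ⟨orbitCoord v, act_orbitCoord_secRetraction v.2⟩)

end

lemma not_exists_isCompact_isOpen_sec : ¬ ∃ K : Set Sec, K.Nonempty ∧ IsCompact K ∧ IsOpen K := by
  refine not_exists_isCompact_isOpen_of_isPreconnected_unbounded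
    (fun v : Sec => (v : Fin 3 → ℝ) 2) ((continuous_apply 2).comp continuous_subtype_val) ?_
  intro x
  let line : ℝ → Sec := fun z => ⟨![(x : Fin 3 → ℝ) 0, 0, z], x.2.1, rfl⟩
  have hline : Continuous line :=
    (continuous_const.matrixVecCons (continuous_const.matrixVecCons
      (continuous_id.matrixVecCons continuous_const))).subtype_mk _
  have hx : line ((x : Fin 3 → ℝ) 2) = x := by
    ext i
    fin_cases i
    · rfl
    · exact x.2.2.symm
    · rfl
  refine ⟨range line, ⟨_, hx⟩, isPreconnected_range hline, ?_⟩
  rw [← range_comp]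
  exact range_id (α := ℝ) ▸ not_bddAbove_univ

theorem section_and_no_compact_open_case_2_general (α : ℝ) :
    (∀ p : ℝ × ℝ, ∀ v ∈ Om, act α p v ∈ Om) ∧
    Sec ⊆ Om ∧
    (∃ e : ((ℝ × ℝ) × ↥Sec) ≃ₜ ↥Om,
      ∀ (p : ℝ × ℝ) (c : ↥Sec), ((e (p, c) : ↥Om) : Fin 3 → ℝ) = act α p (c : Fin 3 → ℝ)) ∧
    (¬ ∃ K : Set (Quot (orbitRel α)), K.Nonempty ∧ IsCompact K ∧ IsOpen K) := by
  refine ⟨fun p v hv => act_mem_om p hv, sec_subset_om,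
    ⟨secHomeomorph α, coe_secHomeomorph_apply⟩, ?_⟩
  rintro ⟨K, hne, hK, hKo⟩
  let e := orbitSpaceHomeomorphSec α
  exact not_exists_isCompact_isOpen_sec
    ⟨e '' K, hne.image e, hK.image e.continuous, e.isOpen_image.2 hKo⟩

/-- For `α ≠ 0`, `Ω = {v₁ ≠ 0}` is `H`-invariant, `Σ` is a topological
section for the `H`-action on `Ω`, and `Ω/H` contains no nonempty compact open subset. -/
theorem section_and_no_compact_open_case_2 (α : ℝ) (hα : α ≠ 0) :
    (∀ p : ℝ × ℝ, ∀ v ∈ Om, act α p v ∈ Om) ∧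
    Sec ⊆ Om ∧
    (∃ e : ((ℝ × ℝ) × ↥Sec) ≃ₜ ↥Om,
      ∀ (p : ℝ × ℝ) (c : ↥Sec), ((e (p, c) : ↥Om) : Fin 3 → ℝ) = act α p (c : Fin 3 → ℝ)) ∧
    (¬ ∃ K : Set (Quot (orbitRel α)), K.Nonempty ∧ IsCompact K ∧ IsOpen K) :=
  section_and_no_compact_open_case_2_general α
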